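/- arXiv:2605.23894 — 4 statements merged into one kernel-verified Lean document; each statement's English description precedes it below -/
import Mathlib

section
/- Let F be a finite field, M ≤ F^× a multiplicative subgroup, and for λ∈{0,1} let a_i^{(λ)}, b_j^{(λ)} ∈ F (0 ≤ i,j < J). Define binary matrices H_X and H_Z with columns indexed by (λ,t,h) ∈ {0,1}×F×M, where column (λ,t,h) has a 1 in X-row (i, t + a_i^{(λ)}h) for each i, and a 1 in Z-row (j, t + b_j^{(λ)}h) for each j. Assume b_j^{(λ)} − a_i^{(λ)} ≠ 0 for all λ,i,j, and assume the coset equality (b_j^{(0)} − a_i^{(0)})M = (b_j^{(1)} − a_i^{(1)})M for all i,j. Then H_X H_Z^T = 0 over F_2; equivalently, for every X-row and every Z-row, the number of columns incident to both is even. -/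
/-- CSS orthogonality of the two-branch multiplicative-coset base:
under the nonzero-difference condition and the cross-type coset equality, every
X-row and every Z-row share an even number of columns, i.e. H_X H_Z^T = 0 over F_2. -/
theorem two_branch_base_css_orthogonality
    {F : Type*} [Field F] [Fintype F] [DecidableEq F]
    (M : Subgroup Fˣ) [Fintype M]
    (J : ℕ)
    (a b : Bool → Fin J → F)
    (hnz : ∀ (l : Bool) (i j : Fin J), b l j - a l i ≠ 0)
    (hcoset : ∀ (i j : Fin J),
      {x : F | ∃ h : M, x = (b false j - a false i) * ((h : Fˣ) : F)} =
      {x : F | ∃ h : M, x = (b true j - a true i) * ((h : Fˣ) : F)}) :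
    ∀ (i j : Fin J) (r s : F),
      Even ((Finset.univ.filter
        (fun c : Bool × F × M =>
          r = c.2.1 + a c.1 i * ((c.2.2 : Fˣ) : F) ∧
          s = c.2.1 + b c.1 j * ((c.2.2 : Fˣ) : F))).card) := by
  intro i j r s
  classical
  set n : Bool → ℕ := fun l => (Finset.univ.filter
    (fun x : F × M => r = x.1 + a l i * ((x.2 : Fˣ) : F) ∧
      s = x.1 + b l j * ((x.2 : Fˣ) : F))).card with hn
  have hsplit : (Finset.univ.filter
      (fun c : Bool × F × M =>
        r = c.2.1 + a c.1 i * ((c.2.2 : Fˣ) : F) ∧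
        s = c.2.1 + b c.1 j * ((c.2.2 : Fˣ) : F))).card = n false + n true := by
    rw [Finset.card_filter, Fintype.sum_prod_type, Fintype.sum_bool]
    simp only [hn, Finset.card_filter]
    exact Nat.add_comm _ _
  have hsub : ∀ l, n l ≤ 1 := by
    intro l
    apply Finset.card_le_one.mpr
    intro x hx y hy
    simp only [Finset.mem_filter] at hx hy
    obtain ⟨-, hx1, hx2⟩ := hx
    obtain ⟨-, hy1, hy2⟩ := hy
    have hx3 : (b l j - a l i) * ((x.2 : Fˣ) : F) = s - r := by
      rw [hx1, hx2]; ring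
    have hy3 : (b l j - a l i) * ((y.2 : Fˣ) : F) = s - r := by
      rw [hy1, hy2]; ring
    have h2 : ((x.2 : Fˣ) : F) = ((y.2 : Fˣ) : F) :=
      mul_left_cancel₀ (hnz l i j) (hx3.trans hy3.symm)
    have h2' : x.2 = y.2 := Subtype.ext (Units.ext h2)
    have h1 : x.1 = y.1 := by
      have := hx1.symm.trans hy1
      rw [h2] at this
      exact add_right_cancel this
    exact Prod.ext h1 h2'
  have h0 : ∀ l, 0 < n l ↔
      (s - r) ∈ {x : F | ∃ h : M, x = (b l j - a l i) * ((h : Fˣ) : F)} := by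
    intro l
    constructor
    · intro hpos
      rw [hn] at hpos
      obtain ⟨x, hx⟩ := Finset.card_pos.mp hpos
      simp only [Finset.mem_filter] at hx
      obtain ⟨-, hx1, hx2⟩ := hx
      exact ⟨x.2, by rw [hx1, hx2]; ring⟩
    · rintro ⟨h, hh⟩
      rw [hn]
      apply Finset.card_pos.mpr
      refine ⟨(r - a l i * ((h : Fˣ) : F), h), ?_⟩
      simp only [Finset.mem_filter, Finset.mem_univ, true_and]
      constructor
      · ring
      · have : s = r + (b l j - a l i) * ((h : Fˣ) : F) := by
          rw [← hh]; ring
        rw [this]; ring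
  have hkey : n false = n true := by
    rcases Nat.lt_or_ge 0 (n false) with h | h
    · have h1 : 0 < n true := (h0 true).mpr ((hcoset i j) ▸ (h0 false).mp h)
      have := hsub false; have := hsub true; omega
    · have hf : n false = 0 := by omega
      have ht : n true = 0 := by
        by_contra hc
        have := (h0 false).mpr (by
          rw [hcoset i j]; exact (h0 true).mp (Nat.pos_of_ne_zero hc))
        omega
      omega
  rw [hsplit, hkey]
  exact Even.add_self _
end

section
/- With the two-branch multiplicative-coset base of the previous context, assume that for each λ∈{0,1}: a_{i'}^{(λ)} − a_i^{(λ)} ≠ 0 for all i < i', and that the cosets (a_{i'}^{(0)} − a_i^{(0)})M and (a_{i'}^{(1)} − a_i^{(1)})M are disjoint for all i < i'. Then no two distinct X-rows share two or more columns; that is, the Tanner graph of H_X contains no 4-cycle. -/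
/-- same-type 4-cycle exclusion on the X side: under the
nonzero-difference condition and coset disjointness between the two branches,
no two distinct X-rows share two or more columns. -/
theorem two_branch_base_no_X_four_cycles
    {F : Type*} [Field F] [Fintype F] [DecidableEq F]
    (M : Subgroup Fˣ) [Fintype M]
    (J : ℕ)
    (a : Bool → Fin J → F)
    (hnz : ∀ (l : Bool) (i i' : Fin J), i < i' → a l i' - a l i ≠ 0)
    (hdisj : ∀ (i i' : Fin J), i < i' →
      Disjoint
        {x : F | ∃ h : M, x = (a false i' - a false i) * ((h : Fˣ) : F)}
        {x : F | ∃ h : M, x = (a true i' - a true i) * ((h : Fˣ) : F)}) :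
    ∀ (i i' : Fin J) (r r' : F), (i, r) ≠ (i', r') →
      (Finset.univ.filter
        (fun c : Bool × F × M =>
          r = c.2.1 + a c.1 i * ((c.2.2 : Fˣ) : F) ∧
          r' = c.2.1 + a c.1 i' * ((c.2.2 : Fˣ) : F))).card ≤ 1 := by
  intro i i' r r' hne
  rw [Finset.card_le_one]
  rintro ⟨l1, t1, h1⟩ hc1 ⟨l2, t2, h2⟩ hc2
  simp only [Finset.mem_filter, Finset.mem_univ, true_and] at hc1 hc2
  obtain ⟨e1, e1'⟩ := hc1
  obtain ⟨e2, e2'⟩ := hc2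
  have key1 : r' - r = (a l1 i' - a l1 i) * ((h1 : Fˣ) : F) := by
    rw [e1, e1']; ring
  have key2 : r' - r = (a l2 i' - a l2 i) * ((h2 : Fˣ) : F) := by
    rw [e2, e2']; ring
  -- i ≠ i'
  have hii : i ≠ i' := by
    rintro rfl
    apply hne
    have : r' - r = 0 := by rw [key1]; ring
    have : r = r' := by linear_combination -this
    rw [this]
  have hd1 : a l1 i' - a l1 i ≠ 0 := by
    rcases hii.lt_or_gt with h | h
    · exact hnz l1 i i' h
    · intro h0
      exact hnz l1 i' i h (by linear_combination -h0)
  -- l1 = l2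
  have hl : l1 = l2 := by
    by_contra hl
    rcases hii.lt_or_gt with hlt | hlt
    · have hdj := hdisj i i' hlt
      rw [Set.disjoint_left] at hdj
      cases l1
      · have hl2 : l2 = true := by cases l2 <;> simp_all
        exact hdj ⟨h1, key1⟩ ⟨h2, by rw [← hl2]; exact key2⟩
      · have hl2 : l2 = false := by cases l2 <;> simp_all
        exact hdj ⟨h2, by rw [← hl2]; exact key2⟩ ⟨h1, key1⟩
    · have hdj := hdisj i' i hlt
      rw [Set.disjoint_left] at hdj
      have key1' : r - r' = (a l1 i - a l1 i') * ((h1 : Fˣ) : F) := by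
        linear_combination -key1
      have key2' : r - r' = (a l2 i - a l2 i') * ((h2 : Fˣ) : F) := by
        linear_combination -key2
      cases l1
      · have hl2 : l2 = true := by cases l2 <;> simp_all
        exact hdj ⟨h1, key1'⟩ ⟨h2, by rw [← hl2]; exact key2'⟩
      · have hl2 : l2 = false := by cases l2 <;> simp_all
        exact hdj ⟨h2, by rw [← hl2]; exact key2'⟩ ⟨h1, key1'⟩
  subst hl
  have hh : ((h1 : Fˣ) : F) = ((h2 : Fˣ) : F) :=
    mul_left_cancel₀ hd1 (by rw [← key1, key2])
  have hh2 : h1 = h2 := Subtype.ext (Units.ext hh)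
  have ht : t1 = t2 := by
    linear_combination e2 - e1 - a l1 i * hh
  simp [hh2, ht]
end

section
/- Let (H_X, H_Z) be binary matrices over F_2 such that every row r of H_X and every row z of H_Z have supports intersecting in either 0 or exactly 2 columns. For a positive integer P, let Π^s denote the P×P circulant permutation matrix sending row u to column u+s mod P. Assign exponents s_X(r,c), s_Z(z,c) ∈ Z/PZ to every nonzero entry, and form the lifted matrices by replacing each nonzero entry by the corresponding Π^s. If for every pair (r,z) sharing exactly two columns c_0, c_1 one has s_X(r,c_0) − s_Z(z,c_0) ≡ s_X(r,c_1) − s_Z(z,c_1) (mod P), then H_X^lift (H_Z^lift)^T = 0 over F_2. -/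
/-- CSS orthogonality after CPM lifting: if every X-row/Z-row pair
shares 0 or exactly 2 base columns, and the exponent congruence holds on every
pair of shared columns, then the lifted matrices satisfy
H_X^lift (H_Z^lift)^T = 0 over F_2 (every block entry of the product vanishes). -/
theorem cpm_lift_css_orthogonality
    {RX RZ C : Type*} [Fintype C] [DecidableEq C]
    (P : ℕ) [NeZero P]
    (HX : RX → C → Prop) (HZ : RZ → C → Prop)
    [∀ r c, Decidable (HX r c)] [∀ z c, Decidable (HZ z c)]
    (sX : RX → C → ZMod P) (sZ : RZ → C → ZMod P)
    (hshare : ∀ (r : RX) (z : RZ),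
      (Finset.univ.filter (fun c => HX r c ∧ HZ z c)).card = 0 ∨
      (Finset.univ.filter (fun c => HX r c ∧ HZ z c)).card = 2)
    (hcong : ∀ (r : RX) (z : RZ) (c0 c1 : C), c0 ≠ c1 →
      HX r c0 → HZ z c0 → HX r c1 → HZ z c1 →
      sX r c0 - sZ z c0 = sX r c1 - sZ z c1) :
    ∀ (r : RX) (z : RZ) (u v : ZMod P),
      ∑ cw : C × ZMod P,
        (if HX r cw.1 ∧ cw.2 = u + sX r cw.1 then (1 : ZMod 2) else 0) *
        (if HZ z cw.1 ∧ cw.2 = v + sZ z cw.1 then (1 : ZMod 2) else 0) = 0 := by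
  intro r z u v
  classical
  rw [Fintype.sum_prod_type]
  have hinner : ∀ c : C,
      (∑ w : ZMod P, (if HX r c ∧ w = u + sX r c then (1 : ZMod 2) else 0) *
        (if HZ z c ∧ w = v + sZ z c then (1 : ZMod 2) else 0))
      = if HX r c ∧ HZ z c ∧ u + sX r c = v + sZ z c then 1 else 0 := by
    intro c
    by_cases hx : HX r c
    · by_cases hz : HZ z c
      · by_cases he : u + sX r c = v + sZ z c
        · rw [Finset.sum_eq_single (u + sX r c)]
          · simp [hx, hz, he]
          · intro w _ hw
            by_cases h2 : w = v + sZ z c <;> simp_all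
          · simp
        · simp only [hx, hz, he, true_and, and_false, if_false]
          apply Finset.sum_eq_zero
          intro w _
          by_cases h1 : w = u + sX r c <;> by_cases h2 : w = v + sZ z c <;> simp_all
      · simp [hz]
    · simp [hx]
  rw [Finset.sum_congr rfl (fun c _ => hinner c)]
  rw [Finset.sum_boole]
  set T := Finset.univ.filter (fun c => HX r c ∧ HZ z c ∧ u + sX r c = v + sZ z c) with hT
  set S := Finset.univ.filter (fun c => HX r c ∧ HZ z c) with hS
  have hsub : T ⊆ S := by
    intro c hc
    simp only [hT, hS, Finset.mem_filter] at *
    exact ⟨hc.1, hc.2.1, hc.2.2.1⟩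
  rcases hshare r z with h0 | h2
  · have : T.card = 0 := Nat.le_zero.mp (h0 ▸ Finset.card_le_card hsub)
    simp [this]
  · rcases Finset.eq_empty_or_nonempty T with he | ⟨c0, hc0⟩
    · simp [he]
    · have hTS : S ⊆ T := by
        intro c hc
        simp only [hT, hS, Finset.mem_filter] at *
        refine ⟨hc.1, hc.2.1, hc.2.2, ?_⟩
        by_cases hcc : c = c0
        · subst hcc; exact hc0.2.2.2
        · have := hcong r z c c0 hcc hc.2.1 hc.2.2 hc0.2.1 hc0.2.2.1
          have h0 : u + sX r c0 = v + sZ z c0 := hc0.2.2.2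
          have : sX r c - sZ z c = sX r c0 - sZ z c0 := this
          have : u + sX r c = v + sZ z c := by
            have h' : sX r c0 - sZ z c0 = v - u := by
              linear_combination h0
            have h'' : sX r c - sZ z c = v - u := by rw [‹sX r c - sZ z c = _›, h']
            linear_combination h''
          exact this
      have hTeq : T = S := Finset.Subset.antisymm hsub hTS
      rw [hTeq, h2]
      decide
end

section
/- Let H_X^lift be a P-fold circulant lift of a binary matrix H_X with edge labels s_X(r,c) ∈ Z/PZ, let K ≤ Z/PZ be a subgroup, let T be a set of base columns, and for each c ∈ T fix f_c ∈ Z/PZ. Consider the lifted support T̃ = {(c, f_c + k) : c ∈ T, k ∈ K}. If the indicator vector of T̃ lies in the kernel of H_X^lift over F_2, then for every X-row r whose support meets T in exactly two columns a, b, one has f_b − f_a ≡ s_X(r,b) − s_X(r,a) in the quotient group (Z/PZ)/K. -/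
/-- necessary condition for a lift-coordinate coset support to have
zero syndrome: if the indicator of T̃ = {(c, f_c + k) : c ∈ T, k ∈ K} is in the
kernel of the lifted matrix over F_2, then for every X-row r meeting T in exactly
two columns a, b one has f_b − f_a ≡ s_X(r,b) − s_X(r,a) modulo K. -/
theorem lift_coordinate_coset_support_necessary
    {RX C : Type*} [Fintype C] [DecidableEq C]
    (P : ℕ) [NeZero P]
    (HX : RX → C → Prop) [∀ r c, Decidable (HX r c)]
    (sX : RX → C → ZMod P)
    (K : AddSubgroup (ZMod P)) [DecidablePred (· ∈ K)]
    (T : Finset C) (f : C → ZMod P)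
    (hker : ∀ (r : RX) (u : ZMod P),
      ∑ q : C × ZMod P,
        (if HX r q.1 ∧ q.2 = u + sX r q.1 then (1 : ZMod 2) else 0) *
        (if q.1 ∈ T ∧ q.2 - f q.1 ∈ K then (1 : ZMod 2) else 0) = 0) :
    ∀ (r : RX) (a b : C), a ≠ b → a ∈ T → b ∈ T → HX r a → HX r b →
      (∀ c ∈ T, HX r c → c = a ∨ c = b) →
      (f b - f a) - (sX r b - sX r a) ∈ K := by
  intro r a b hab haT hbT hHa hHb hex
  set u : ZMod P := f a - sX r a with hu
  have h := hker r u
  rw [Fintype.sum_prod_type] at h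
  have hsum : ∀ c : C,
      (∑ v : ZMod P, (if HX r c ∧ v = u + sX r c then (1 : ZMod 2) else 0) *
        (if c ∈ T ∧ v - f c ∈ K then (1 : ZMod 2) else 0)) =
      if HX r c ∧ c ∈ T ∧ u + sX r c - f c ∈ K then (1 : ZMod 2) else 0 := by
    intro c
    by_cases hc : HX r c
    · rw [Finset.sum_eq_single (u + sX r c)]
      · simp [hc]
      · intro v _ hv; simp [hv]
      · simp
    · simp [hc]
  simp_rw [hsum] at h
  have hvan : ∀ c ∈ Finset.univ, c ∉ ({a, b} : Finset C) →
      (if HX r c ∧ c ∈ T ∧ u + sX r c - f c ∈ K then (1 : ZMod 2) else 0) = 0 := by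
    intro c _ hc
    simp only [Finset.mem_insert, Finset.mem_singleton, not_or] at hc
    by_cases hHc : HX r c
    · by_cases hcT : c ∈ T
      · rcases hex c hcT hHc with rfl | rfl
        · exact absurd rfl hc.1
        · exact absurd rfl hc.2
      · simp [hcT]
    · simp [hHc]
  rw [← Finset.sum_subset (Finset.subset_univ ({a, b} : Finset C)) hvan,
    Finset.sum_pair hab] at h
  have ha0 : u + sX r a - f a ∈ K := by
    have : u + sX r a - f a = 0 := by rw [hu]; ring
    rw [this]; exact zero_mem K
  rw [if_pos ⟨hHa, haT, ha0⟩] at h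
  have hb1 : (if HX r b ∧ b ∈ T ∧ u + sX r b - f b ∈ K then (1 : ZMod 2) else 0) = 1 := by
    by_contra hne
    rw [if_neg (fun hcond => hne (if_pos hcond))] at h
    simp at h
  have hbK : u + sX r b - f b ∈ K := by
    by_contra hK
    rw [if_neg (fun hcond => hK hcond.2.2)] at hb1
    exact one_ne_zero hb1.symm
  have := neg_mem hbK
  have heq : (f b - f a) - (sX r b - sX r a) = -(u + sX r b - f b) := by
    rw [hu]; ring
  rwa [heq]
end
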